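/- Brezzi stability for a perturbed saddle-point problem (Braess): Let V, Q be real Hilbert spaces, a : V×V→ℝ symmetric bounded and coercive on the kernel of B, b : V×Q→ℝ bounded satisfying the inf-sup condition with constant β₀ > 0, and c : Q×Q→ℝ symmetric positive semidefinite bounded with c(μ,μ) ≤ ε‖μ‖², where in addition a is coercive on all of V. Then the perturbed problem a(u,v) + b(v,λ) = F(v), b(u,μ) − c(λ,μ) = G(μ) has a unique solution with stability constant independent of ε ∈ [0, ε₀] for ε₀ small enough. -/

import Mathlib

set_option maxHeartbeats 1600000


open RealInnerProductSpace

/-- Brezzi/Braess stability for the perturbed saddle-point problem: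
with `a` symmetric, bounded and coercive on `V`, `b` bounded and satisfying the
inf-sup condition with constant `β₀ > 0`, and penalty `c(λ,μ) = t²⟨λ,μ⟩`, the system
`a(u,v) + b(v,λ) = F(v)`, `b(u,μ) − t²⟨λ,μ⟩ = G(μ)` has a unique solution obeying
an a priori bound `‖u‖ + ‖λ‖ ≤ C(‖F‖ + ‖G‖)` with `C` independent of `t² ∈ [0, ε₀]`
for some `ε₀ > 0`. -/
theorem braess_perturbed_saddle_point
    {V Q : Type*} [NormedAddCommGroup V] [InnerProductSpace ℝ V] [CompleteSpace V]
    [NormedAddCommGroup Q] [InnerProductSpace ℝ Q] [CompleteSpace Q]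
    (a : V →ₗ[ℝ] V →ₗ[ℝ] ℝ) (b : V →ₗ[ℝ] Q →ₗ[ℝ] ℝ)
    (Ca Cb α β₀ : ℝ) (hα : 0 < α) (hβ₀ : 0 < β₀)
    (ha_bdd : ∀ u v : V, |a u v| ≤ Ca * ‖u‖ * ‖v‖)
    (ha_symm : ∀ u v : V, a u v = a v u)
    (ha_coer : ∀ v : V, α * ‖v‖ ^ 2 ≤ a v v)
    (hb_bdd : ∀ (v : V) (μ : Q), |b v μ| ≤ Cb * ‖v‖ * ‖μ‖)
    (hb_infsup : ∀ μ : Q, ∀ ε > (0 : ℝ), ∃ v : V, v ≠ 0 ∧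
      (β₀ * ‖μ‖ - ε) * ‖v‖ ≤ b v μ) :
    ∃ ε₀ > (0 : ℝ), ∃ Cstab > (0 : ℝ), ∀ t : ℝ, t ^ 2 ≤ ε₀ →
      ∀ (F : V →L[ℝ] ℝ) (G : Q →L[ℝ] ℝ),
        ∃ (u : V) (lam : Q),
          (∀ v : V, a u v + b v lam = F v) ∧
          (∀ μ : Q, b u μ - t ^ 2 * ⟪lam, μ⟫ = G μ) ∧
          ‖u‖ + ‖lam‖ ≤ Cstab * (‖F‖ + ‖G‖) ∧
          (∀ (u' : V) (lam' : Q),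
            (∀ v : V, a u' v + b v lam' = F v) →
            (∀ μ : Q, b u' μ - t ^ 2 * ⟪lam', μ⟫ = G μ) →
            u' = u ∧ lam' = lam) := by
  -- Ca is positive (there is a nonzero vector by the inf-sup condition)
  have hCa : 0 < Ca := by
    obtain ⟨v, hv0, -⟩ := hb_infsup 0 1 one_pos
    have h1 : α * ‖v‖ ^ 2 ≤ a v v := ha_coer v
    have h2 : a v v ≤ Ca * ‖v‖ * ‖v‖ := (le_abs_self _).trans (ha_bdd v v)
    have hv : 0 < ‖v‖ := norm_pos_iff.mpr hv0
    have hsq : ‖v‖ ^ 2 = ‖v‖ * ‖v‖ := sq ‖v‖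
    nlinarith [mul_pos hv hv]
  -- replace Cb by a nonnegative constant
  set Cb' : ℝ := max Cb 0 with hCb'def
  have hCb' : 0 ≤ Cb' := le_max_right _ _
  have hb_bdd' : ∀ (v : V) (μ : Q), |b v μ| ≤ Cb' * ‖v‖ * ‖μ‖ := fun v μ =>
    (hb_bdd v μ).trans (by
      have := mul_nonneg (norm_nonneg v) (norm_nonneg μ)
      have h := le_max_left Cb 0
      nlinarith)
  -- injectivity from coercivity of a
  have ha_inj : ∀ x y : V, (∀ v, a x v = a y v) → x = y := by
    intro x y hxy
    have h1 : α * ‖x - y‖ ^ 2 ≤ a (x - y) (x - y) := ha_coer _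
    have h2 : a (x - y) (x - y) = 0 := by
      have := hxy (x - y)
      simp only [map_sub, LinearMap.sub_apply] at this ⊢
      linarith
    have h4 : ‖x - y‖ ^ 2 ≤ 0 := by nlinarith
    have h3 : ‖x - y‖ = 0 :=
      (pow_eq_zero_iff two_ne_zero).mp (le_antisymm h4 (sq_nonneg _))
    rw [← sub_eq_zero]; exact norm_eq_zero.mp h3
  -- the solution operator w : for each μ, a (w μ) v = b v μ, and wsol for functionals
  obtain ⟨wsol, hwsol⟩ : ∃ wsol : (V →L[ℝ] ℝ) → V, ∀ (f : V →L[ℝ] ℝ) (v : V),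
      a (wsol f) v = f v := by
    let A : V →L[ℝ] V →L[ℝ] ℝ := LinearMap.mkContinuous₂ a Ca (fun u v => by
      simpa [Real.norm_eq_abs] using ha_bdd u v)
    have coerA : IsCoercive A := ⟨α, hα, fun u => by
      have h := ha_coer u
      have : A u u = a u u := rfl
      rw [this]; nlinarith [sq ‖u‖]⟩
    refine ⟨fun f => coerA.continuousLinearEquivOfBilin.symm
      ((InnerProductSpace.toDual ℝ V).symm f), fun f v => ?_⟩
    have h1 : ⟪coerA.continuousLinearEquivOfBilin
        (coerA.continuousLinearEquivOfBilin.symm ((InnerProductSpace.toDual ℝ V).symm f)), v⟫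
        = A (coerA.continuousLinearEquivOfBilin.symm ((InnerProductSpace.toDual ℝ V).symm f)) v :=
      coerA.continuousLinearEquivOfBilin_apply _ v
    rw [coerA.continuousLinearEquivOfBilin.apply_symm_apply,
      InnerProductSpace.toDual_symm_apply] at h1
    exact h1.symm
  -- continuous version of b
  obtain ⟨B, hB⟩ : ∃ B : V →L[ℝ] Q →L[ℝ] ℝ, ∀ v μ, B v μ = b v μ :=
    ⟨LinearMap.mkContinuous₂ b Cb' (fun v μ => by
      simpa [Real.norm_eq_abs] using hb_bdd' v μ), fun v μ => rfl⟩
  obtain ⟨w, hw⟩ : ∃ w : Q → V, ∀ μ v, a (w μ) v = b v μ :=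
    ⟨fun μ => wsol (B.flip μ), fun μ v => by
      rw [hwsol, ContinuousLinearMap.flip_apply, hB]⟩
  have hw_add : ∀ l m : Q, w (l + m) = w l + w m := by
    intro l m
    apply ha_inj; intro v
    have h1 : a (w l + w m) v = b v l + b v m := by
      rw [map_add, LinearMap.add_apply, hw, hw]
    rw [hw, h1, map_add]
  have hw_smul : ∀ (c : ℝ) (l : Q), w (c • l) = c • w l := by
    intro c l
    apply ha_inj; intro v
    have h1 : a (c • w l) v = c * b v l := by
      rw [map_smul, LinearMap.smul_apply, hw, smul_eq_mul]
    rw [hw, h1, map_smul, smul_eq_mul]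
  -- bounds on w
  have hw_ub : ∀ μ : Q, ‖w μ‖ ≤ Cb' / α * ‖μ‖ := by
    intro μ
    have h1 : α * ‖w μ‖ ^ 2 ≤ a (w μ) (w μ) := ha_coer _
    have h2 : a (w μ) (w μ) = b (w μ) μ := hw μ (w μ)
    have h3 : b (w μ) μ ≤ Cb' * ‖w μ‖ * ‖μ‖ := (le_abs_self _).trans (hb_bdd' _ _)
    rcases eq_or_lt_of_le (norm_nonneg (w μ)) with h | h
    · rw [← h]; positivity
    · rw [div_mul_eq_mul_div, le_div_iff₀ hα]; nlinarith
  have hw_lb : ∀ μ : Q, β₀ * ‖μ‖ ≤ Ca * ‖w μ‖ := by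
    intro μ
    refine le_of_forall_pos_le_add (fun ε hε => ?_)
    obtain ⟨v, hv0, hv⟩ := hb_infsup μ ε hε
    have hvn : 0 < ‖v‖ := norm_pos_iff.mpr hv0
    have h2 : a (w μ) v ≤ Ca * ‖w μ‖ * ‖v‖ := (le_abs_self _).trans (ha_bdd _ _)
    have h3 : (β₀ * ‖μ‖ - ε) * ‖v‖ ≤ Ca * ‖w μ‖ * ‖v‖ := by
      calc (β₀ * ‖μ‖ - ε) * ‖v‖ ≤ b v μ := hv
        _ = a (w μ) v := (hw μ v).symm
        _ ≤ Ca * ‖w μ‖ * ‖v‖ := h2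
    nlinarith
  -- constants
  set γ : ℝ := α * (β₀ / Ca) ^ 2 with hγdef
  have hγ : 0 < γ := by positivity
  set D : ℝ := Cb' / α with hDdef
  have hD : 0 ≤ D := by positivity
  set Cstab : ℝ := 1 / α + (1 + D) * ((D + 1) / γ) with hCstabdef
  have hCstab : 0 < Cstab := by positivity
  refine ⟨1, one_pos, Cstab, hCstab, fun t ht F G => ?_⟩
  have ht0 : (0 : ℝ) ≤ t ^ 2 := sq_nonneg t
  -- the Schur complement bilinear form
  set K : ℝ := Ca * D ^ 2 + 1 with hKdef
  set Sl : Q →ₗ[ℝ] Q →ₗ[ℝ] ℝ :=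
    LinearMap.mk₂ ℝ (fun l m => a (w l) (w m) + t ^ 2 * ⟪l, m⟫)
      (fun l l' m => by
        rw [hw_add, map_add, LinearMap.add_apply, inner_add_left]; ring)
      (fun c l m => by
        rw [hw_smul, map_smul, LinearMap.smul_apply, real_inner_smul_left]
        simp only [smul_eq_mul]; ring)
      (fun l m m' => by rw [hw_add, map_add, inner_add_right]; ring)
      (fun c l m => by
        rw [hw_smul, map_smul, real_inner_smul_right]
        simp only [smul_eq_mul]; ring) with hSldef
  have hSl_apply : ∀ l m, Sl l m = a (w l) (w m) + t ^ 2 * ⟪l, m⟫ := by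
    intro l m; rw [hSldef, LinearMap.mk₂_apply]
  have hSl_bdd : ∀ l m : Q, ‖Sl l m‖ ≤ K * ‖l‖ * ‖m‖ := by
    intro l m
    rw [hSl_apply, Real.norm_eq_abs]
    have h1 : |a (w l) (w m)| ≤ Ca * ‖w l‖ * ‖w m‖ := ha_bdd _ _
    have h2 : ‖w l‖ ≤ D * ‖l‖ := hw_ub l
    have h3 : ‖w m‖ ≤ D * ‖m‖ := hw_ub m
    have h5 : |t ^ 2 * ⟪l, m⟫| ≤ ‖l‖ * ‖m‖ := by
      rw [abs_mul, abs_of_nonneg ht0]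
      nlinarith [abs_nonneg ⟪l, m⟫, abs_real_inner_le_norm l m]
    have hmul : ‖w l‖ * ‖w m‖ ≤ (D * ‖l‖) * (D * ‖m‖) :=
      mul_le_mul h2 h3 (norm_nonneg _) (by positivity)
    have hmul2 : Ca * (‖w l‖ * ‖w m‖) ≤ Ca * ((D * ‖l‖) * (D * ‖m‖)) :=
      mul_le_mul_of_nonneg_left hmul hCa.le
    calc |a (w l) (w m) + t ^ 2 * ⟪l, m⟫| ≤ |a (w l) (w m)| + |t ^ 2 * ⟪l, m⟫| := abs_add_le _ _
      _ ≤ Ca * ‖w l‖ * ‖w m‖ + ‖l‖ * ‖m‖ := by nlinarith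
      _ ≤ Ca * (D * ‖l‖) * (D * ‖m‖) + ‖l‖ * ‖m‖ := by nlinarith
      _ = K * ‖l‖ * ‖m‖ := by rw [hKdef]; ring
  obtain ⟨S, hS_apply⟩ : ∃ S : Q →L[ℝ] Q →L[ℝ] ℝ,
      ∀ l m, S l m = a (w l) (w m) + t ^ 2 * ⟪l, m⟫ :=
    ⟨LinearMap.mkContinuous₂ Sl K hSl_bdd, fun l m => by
      rw [LinearMap.mkContinuous₂_apply, hSl_apply]⟩
  have hS_coer : ∀ μ : Q, γ * ‖μ‖ * ‖μ‖ ≤ S μ μ := by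
    intro μ
    rw [hS_apply]
    have h1 : α * ‖w μ‖ ^ 2 ≤ a (w μ) (w μ) := ha_coer _
    have h2 : β₀ * ‖μ‖ ≤ Ca * ‖w μ‖ := hw_lb μ
    have h3 : (0:ℝ) ≤ t ^ 2 * ⟪μ, μ⟫ := mul_nonneg ht0 real_inner_self_nonneg
    have hsq : (β₀ * ‖μ‖) ^ 2 ≤ (Ca * ‖w μ‖) ^ 2 :=
      pow_le_pow_left₀ (by positivity) h2 2
    have hkey : (β₀ / Ca) ^ 2 * ‖μ‖ ^ 2 ≤ ‖w μ‖ ^ 2 := by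
      rw [div_pow, div_mul_eq_mul_div, div_le_iff₀ (by positivity)]
      calc β₀ ^ 2 * ‖μ‖ ^ 2 = (β₀ * ‖μ‖) ^ 2 := by ring
        _ ≤ (Ca * ‖w μ‖) ^ 2 := hsq
        _ = ‖w μ‖ ^ 2 * Ca ^ 2 := by ring
    have h4 : γ * ‖μ‖ ^ 2 ≤ α * ‖w μ‖ ^ 2 := by
      rw [hγdef, mul_assoc]
      exact mul_le_mul_of_nonneg_left hkey hα.le
    nlinarith [sq_nonneg ‖μ‖]
  have coerS : IsCoercive S := ⟨γ, hγ, hS_coer⟩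
  have hS_inj : ∀ x y : Q, (∀ m, S x m = S y m) → x = y := by
    intro x y hxy
    have h1 : γ * ‖x - y‖ * ‖x - y‖ ≤ S (x - y) (x - y) := hS_coer _
    have h2 : S (x - y) (x - y) = 0 := by
      have := hxy (x - y)
      simp only [map_sub, ContinuousLinearMap.sub_apply] at this ⊢
      linarith
    have h4 : ‖x - y‖ * ‖x - y‖ ≤ 0 := by nlinarith
    have h3 : ‖x - y‖ = 0 :=
      mul_self_eq_zero.mp (le_antisymm h4 (mul_self_nonneg _))
    rw [← sub_eq_zero]; exact norm_eq_zero.mp h3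
  -- particular solution for F
  set wF : V := wsol F with hwFdef
  have hwF : ∀ v, a wF v = F v := hwsol F
  have hwF_bdd : ‖wF‖ ≤ ‖F‖ / α := by
    have h1 : α * ‖wF‖ ^ 2 ≤ a wF wF := ha_coer _
    have h2 : a wF wF = F wF := hwF wF
    have h3 : F wF ≤ ‖F‖ * ‖wF‖ := (le_abs_self _).trans (by
      rw [← Real.norm_eq_abs]; exact F.le_opNorm wF)
    rcases eq_or_lt_of_le (norm_nonneg wF) with h | h
    · rw [← h]; positivity
    · rw [le_div_iff₀ hα]; nlinarith
  -- solve the Schur complement problem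
  obtain ⟨lam, hlam⟩ : ∃ lam : Q, ∀ μ, S lam μ = b wF μ - G μ := by
    refine ⟨coerS.continuousLinearEquivOfBilin.symm
      ((InnerProductSpace.toDual ℝ Q).symm (B wF - G)), fun μ => ?_⟩
    have h1 : ⟪coerS.continuousLinearEquivOfBilin
        (coerS.continuousLinearEquivOfBilin.symm
          ((InnerProductSpace.toDual ℝ Q).symm (B wF - G))), μ⟫
        = S (coerS.continuousLinearEquivOfBilin.symm
          ((InnerProductSpace.toDual ℝ Q).symm (B wF - G))) μ :=
      coerS.continuousLinearEquivOfBilin_apply _ μ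
    rw [coerS.continuousLinearEquivOfBilin.apply_symm_apply,
      InnerProductSpace.toDual_symm_apply] at h1
    rw [← h1, ContinuousLinearMap.sub_apply, hB]
  set u : V := wF - w lam with hudef
  -- equation 1
  have heq1 : ∀ v, a u v + b v lam = F v := by
    intro v
    have h1 : a u v = a wF v - a (w lam) v := by
      rw [hudef, map_sub, LinearMap.sub_apply]
    rw [h1, hwF, hw]; ring
  -- equation 2
  have heq2 : ∀ μ, b u μ - t ^ 2 * ⟪lam, μ⟫ = G μ := by
    intro μ
    have h1 : b u μ = b wF μ - b (w lam) μ := by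
      rw [hudef, map_sub, LinearMap.sub_apply]
    have h2 : b (w lam) μ = a (w lam) (w μ) := by
      rw [ha_symm]; exact (hw μ (w lam)).symm
    have h3 := hlam μ
    rw [hS_apply] at h3
    rw [h1, h2]; linarith
  -- stability bound
  have hlam_bdd : ‖lam‖ ≤ (D + 1) / γ * (‖F‖ + ‖G‖) := by
    have h1 : γ * ‖lam‖ * ‖lam‖ ≤ S lam lam := hS_coer _
    have h2 : S lam lam = b wF lam - G lam := hlam lam
    have h3 : b wF lam ≤ Cb' * ‖wF‖ * ‖lam‖ := (le_abs_self _).trans (hb_bdd' _ _)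
    have h4 : -G lam ≤ ‖G‖ * ‖lam‖ := by
      have hg := G.le_opNorm lam
      rw [Real.norm_eq_abs] at hg
      nlinarith [neg_abs_le (G lam)]
    have h5 : γ * ‖lam‖ * ‖lam‖ ≤ (Cb' * ‖wF‖ + ‖G‖) * ‖lam‖ := by nlinarith
    have h6 : Cb' * ‖wF‖ + ‖G‖ ≤ (D + 1) * (‖F‖ + ‖G‖) := by
      have h7 : Cb' * ‖wF‖ ≤ Cb' * (‖F‖ / α) := mul_le_mul_of_nonneg_left hwF_bdd hCb'
      have h8 : Cb' * (‖F‖ / α) = D * ‖F‖ := by rw [hDdef]; ring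
      nlinarith [norm_nonneg F, norm_nonneg G]
    rcases eq_or_lt_of_le (norm_nonneg lam) with h | h
    · rw [← h]; positivity
    · rw [div_mul_eq_mul_div, le_div_iff₀ hγ]
      nlinarith
  have hu_bdd : ‖u‖ ≤ ‖F‖ / α + D * ‖lam‖ := by
    have h1 : ‖u‖ ≤ ‖wF‖ + ‖w lam‖ := norm_sub_le _ _
    have h2 : ‖w lam‖ ≤ D * ‖lam‖ := hw_ub lam
    linarith
  have hstab : ‖u‖ + ‖lam‖ ≤ Cstab * (‖F‖ + ‖G‖) := by
    have h1 : ‖u‖ + ‖lam‖ ≤ ‖F‖ / α + (1 + D) * ‖lam‖ := by nlinarith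
    have h2 : (1 + D) * ‖lam‖ ≤ (1 + D) * ((D + 1) / γ * (‖F‖ + ‖G‖)) :=
      mul_le_mul_of_nonneg_left hlam_bdd (by linarith)
    have h3 : ‖F‖ / α ≤ 1 / α * (‖F‖ + ‖G‖) := by
      rw [div_eq_mul_inv, one_div]
      have := norm_nonneg G
      nlinarith [inv_pos.mpr hα]
    rw [hCstabdef]
    nlinarith
  refine ⟨u, lam, heq1, heq2, hstab, ?_⟩
  -- uniqueness
  intro u' lam' heq1' heq2'
  have hu' : u' = wF - w lam' := by
    apply ha_inj
    intro v
    have h1 := heq1' v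
    have h2 : a (wF - w lam') v = a wF v - a (w lam') v := by
      rw [map_sub, LinearMap.sub_apply]
    rw [h2, hwF, hw]
    linarith
  have hlam' : lam' = lam := by
    apply hS_inj
    intro m
    have h1 := heq2' m
    rw [hu'] at h1
    have h2 : b (wF - w lam') m = b wF m - b (w lam') m := by
      rw [map_sub, LinearMap.sub_apply]
    have h3 : b (w lam') m = a (w lam') (w m) := by
      rw [ha_symm]; exact (hw m (w lam')).symm
    have h4 := hlam m
    rw [hS_apply, hS_apply]
    rw [h2, h3] at h1
    rw [hS_apply] at h4
    linarith
  exact ⟨by rw [hu', hlam'], hlam'⟩
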